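/- arXiv:2411.18244 — 2 statements merged into one kernel-verified Lean document; each statement's English description precedes it below -/
import Mathlib

section
/- Let n ≥ 3 be a natural number that is not prime (so the set V₂ of elements of ZMod n that are neither 0 nor additive generators is nonempty), let l = φ(n) + 1, and let Tr_avg = (∑_{v ∈ V₂} Tr(v)) / (n − l) be the average transmission in the power graph P(C_n) of the elements of V₂. Then the distance spectral radius satisfies ρ₁(P(C_n)) ≥ ((Tr_avg − 1) + √((Tr_avg − 2l + 1)² + 4l(n − l))) / 2. -/
open scoped Classical

noncomputable section

/-- The power graph of an additive group: distinct `x, y` are adjacent iff one is a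
natural-number multiple (additive power) of the other. -/
def addPowerGraph (G : Type*) [AddGroup G] : SimpleGraph G where
  Adj x y := x ≠ y ∧ ∃ m : ℕ, x = m • y ∨ y = m • x
  symm := by
    constructor
    rintro x y ⟨hxy, m, hm⟩
    exact ⟨hxy.symm, m, hm.symm⟩
  loopless := by
    constructor
    rintro x ⟨hx, -⟩
    exact hx rfl

/-- The distance matrix of a graph on a finite vertex set. -/
def distMatrix {V : Type*} [Fintype V] (G : SimpleGraph V) : Matrix V V ℝ :=
  fun x y => (G.dist x y : ℝ)

/-- The transmission of a vertex: the sum of the distances to all vertices. -/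
def transmission {V : Type*} [Fintype V] (G : SimpleGraph V) (v : V) : ℕ :=
  ∑ w, G.dist v w

/-!
The vertex `0` and the generators of `ZMod n` are adjacent to every other vertex, so on the
partition into these `l` universal vertices and the other `n - l` the distance matrix has
quotient matrix `!![l - 1, n - l; l, Tr_avg - l]`, whose larger eigenvalue is the bound. Lifting
its eigenvector `(n - l, μ)` to a vector constant on both blocks gives a Rayleigh quotient equal
to that eigenvalue, and every Rayleigh quotient is at most `ρ₁`.
-/

open Finset Matrix
open scoped Nat

/-- `ρ • 1 - A` has nonnegative spectrum, hence is positive semidefinite. -/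
lemma Matrix.IsHermitian.dotProduct_mulVec_le {V : Type*} [Fintype V] [DecidableEq V]
    {A : Matrix V V ℝ} (hA : A.IsHermitian) {ρ : ℝ} (hρ : IsGreatest (spectrum ℝ A) ρ)
    (x : V → ℝ) : x ⬝ᵥ A *ᵥ x ≤ ρ * (x ⬝ᵥ x) := by
  set B : Matrix V V ℝ := algebraMap ℝ (Matrix V V ℝ) ρ - A
  have hB : B.IsHermitian := ((IsSelfAdjoint.all ρ).algebraMap _).sub hA
  have hB_eigenvalues : 0 ≤ hB.eigenvalues := fun i => by
    obtain ⟨r, rfl, t, ht, hrt⟩ :=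
      (spectrum.singleton_sub_eq A ρ).symm ▸ hB.eigenvalues_mem_spectrum_real i
    simpa [← hrt] using hρ.2 ht
  have hB_nonneg :=
    (hB.posSemidef_iff_eigenvalues_nonneg.mpr hB_eigenvalues).dotProduct_mulVec_nonneg x
  simp only [B, star_trivial, sub_mulVec, dotProduct_sub, Algebra.algebraMap_eq_smul_one,
    smul_mulVec, one_mulVec, dotProduct_smul, smul_eq_mul] at hB_nonneg
  linarith

section DistanceMatrix

variable {V : Type*} [Fintype V] (G : SimpleGraph V)

lemma distMatrix_comm (v w : V) : distMatrix G v w = distMatrix G w v := by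
  simp [distMatrix, SimpleGraph.dist_comm]

lemma distMatrix_isHermitian : (distMatrix G).IsHermitian := by
  ext v w
  exact distMatrix_comm G w v

lemma transmission_eq_sum_distMatrix (v : V) :
    (transmission G v : ℝ) = ∑ w, distMatrix G v w := by
  simp [transmission, distMatrix]

variable {G}

lemma distMatrix_apply_of_isUniversal {v : V} (hv : G.IsUniversal v) (w : V) :
    distMatrix G v w = if v = w then 0 else 1 := by
  split_ifs with h
  · simp [distMatrix, h]
  · simp [distMatrix, SimpleGraph.dist_eq_one_iff_adj.mpr (hv h)]

end DistanceMatrix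

section BlockVector

variable {V : Type*} [DecidableEq V] (S : Finset V) (p q : ℝ)

def blockVector : V → ℝ := fun v => if v ∈ S then p else q

variable {S p q} in
lemma blockVector_of_mem {v : V} (hv : v ∈ S) : blockVector S p q v = p := if_pos hv

variable {S p q} in
lemma blockVector_of_notMem {v : V} (hv : v ∉ S) : blockVector S p q v = q := if_neg hv

variable [Fintype V]

lemma sum_mul_blockVector (f : V → ℝ) :
    ∑ v, f v * blockVector S p q v = (∑ v ∈ S, f v) * p + (∑ v ∈ Sᶜ, f v) * q := by
  rw [← sum_add_sum_compl S, sum_mul, sum_mul]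
  congr 1 <;> refine sum_congr rfl fun v hv => ?_
  · rw [blockVector_of_mem hv]
  · rw [blockVector_of_notMem (mem_compl.mp hv)]

lemma sum_blockVector : ∑ v, blockVector S p q v = #S * p + #Sᶜ * q := by
  simpa using sum_mul_blockVector S p q 1

lemma blockVector_dotProduct_self :
    blockVector S p q ⬝ᵥ blockVector S p q = #S * p ^ 2 + #Sᶜ * q ^ 2 := by
  rw [dotProduct, sum_mul_blockVector, sum_congr rfl fun v hv => blockVector_of_mem hv,
    sum_congr rfl fun v hv => blockVector_of_notMem (mem_compl.mp hv)]
  simp only [sum_const, nsmul_eq_mul]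
  ring

variable {G : SimpleGraph V} {S}

lemma distMatrix_mulVec_blockVector_of_mem (hS : ∀ v ∈ S, G.IsUniversal v) {v : V}
    (hv : v ∈ S) : (distMatrix G *ᵥ blockVector S p q) v = (#S - 1) * p + #Sᶜ * q := by
  have hterm (w : V) : distMatrix G v w * blockVector S p q w =
      blockVector S p q w - if v = w then blockVector S p q w else 0 := by
    rw [distMatrix_apply_of_isUniversal (hS v hv)]
    split_ifs <;> simp
  simp only [mulVec, dotProduct, hterm, sum_sub_distrib, sum_ite_eq, if_pos (mem_univ v),
    sum_blockVector, blockVector_of_mem hv]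
  ring

lemma distMatrix_mulVec_blockVector_of_notMem (hS : ∀ v ∈ S, G.IsUniversal v) {v : V}
    (hv : v ∉ S) :
    (distMatrix G *ᵥ blockVector S p q) v = #S * p + (transmission G v - #S) * q := by
  have hdist : ∀ w ∈ S, distMatrix G v w = 1 := fun w hw => by
    rw [distMatrix_comm, distMatrix_apply_of_isUniversal (hS w hw),
      if_neg (ne_of_mem_of_not_mem hw hv)]
  have hrow := transmission_eq_sum_distMatrix G v
  rw [← sum_add_sum_compl S, sum_congr rfl hdist] at hrow
  rw [mulVec, dotProduct, sum_mul_blockVector, sum_congr rfl hdist]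
  simp only [sum_const, nsmul_eq_mul, mul_one] at hrow ⊢
  linear_combination -q * hrow

end BlockVector

section UniversalVertices

variable {V : Type*} [Fintype V] [DecidableEq V] {G : SimpleGraph V} {S : Finset V}

lemma blockVector_dotProduct_distMatrix_mulVec (hS : ∀ v ∈ S, G.IsUniversal v) (p q : ℝ) :
    blockVector S p q ⬝ᵥ distMatrix G *ᵥ blockVector S p q =
      #S * ((#S - 1) * p + #Sᶜ * q) * p +
        (#Sᶜ * #S * p + (∑ v ∈ Sᶜ, (transmission G v : ℝ) - #Sᶜ * #S) * q) * q := by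
  rw [dotProduct_comm, dotProduct, sum_mul_blockVector,
    sum_congr rfl fun v hv => distMatrix_mulVec_blockVector_of_mem p q hS hv,
    sum_congr rfl fun v hv => distMatrix_mulVec_blockVector_of_notMem p q hS (mem_compl.mp hv)]
  simp only [sum_const, nsmul_eq_mul, sum_add_distrib, ← sum_mul, sum_sub_distrib]
  ring

theorem le_of_isGreatest_spectrum_distMatrix_of_isUniversal
    (hS : ∀ v ∈ S, G.IsUniversal v) {ρ l c t : ℝ}
    (hρ : IsGreatest (spectrum ℝ (distMatrix G)) ρ) (hl : (#S : ℝ) = l) (hc : (#Sᶜ : ℝ) = c)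
    (hc_pos : 0 < c) (ht : ∑ v ∈ Sᶜ, (transmission G v : ℝ) = t * c) :
    ((t - 1) + √((t - 2 * l + 1) ^ 2 + 4 * l * c)) / 2 ≤ ρ := by
  have hl_nonneg : 0 ≤ l := hl ▸ Nat.cast_nonneg _
  set r := √((t - 2 * l + 1) ^ 2 + 4 * l * c)
  have hr : r ^ 2 = (t - 2 * l + 1) ^ 2 + 4 * l * c := Real.sq_sqrt (by positivity)
  set μ := (t - 2 * l + 1 + r) / 2
  set x := blockVector S c μ
  have hμ_pos : 0 < μ := by
    have ht_nonneg : 0 ≤ t := nonneg_of_mul_nonneg_left (ht ▸ by positivity) hc_pos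
    have hr_nonneg : 0 ≤ r := Real.sqrt_nonneg _
    refine half_pos (by_contra fun h => ?_)
    nlinarith [mul_nonneg hl_nonneg hc_pos.le]
  have hx_pos : 0 < x ⬝ᵥ x := by
    rw [blockVector_dotProduct_self, hl, hc]
    positivity
  have hx_eigen : x ⬝ᵥ distMatrix G *ᵥ x = ((t - 1) + r) / 2 * (x ⬝ᵥ x) := by
    rw [blockVector_dotProduct_distMatrix_mulVec hS, blockVector_dotProduct_self, ht, hl, hc]
    linear_combination (-c * (t - 2 * l + 1 + r) / 8) * hr
  refine le_of_mul_le_mul_right ?_ hx_pos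
  exact hx_eigen ▸ (distMatrix_isHermitian G).dotProduct_mulVec_le hρ x

end UniversalVertices

section PowerGraph

variable {G : Type*} [AddGroup G]

lemma addPowerGraph_isUniversal_zero : (addPowerGraph G).IsUniversal 0 :=
  fun w h => ⟨h, 0, Or.inl (zero_nsmul w).symm⟩

lemma addPowerGraph_isUniversal_of_addOrderOf_eq_card [Finite G] {g : G}
    (hg : addOrderOf g = Nat.card G) : (addPowerGraph G).IsUniversal g := by
  intro w h
  have hw : w ∈ AddSubgroup.zmultiples g := by
    rw [((AddSubgroup.zmultiples g).card_eq_iff_eq_top).mp (hg ▸ Nat.card_zmultiples g)]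
    exact AddSubgroup.mem_top w
  obtain ⟨m, rfl⟩ :=
    (AddSubmonoid.mem_multiples_iff _ _).mp (mem_multiples_iff_mem_zmultiples.mpr hw)
  exact ⟨h, m, Or.inr rfl⟩

lemma card_filter_eq_zero_or_addOrderOf_eq_card [Fintype G] [DecidableEq G] [IsAddCyclic G]
    (h : Fintype.card G ≠ 1) :
    #{g : G | g = 0 ∨ addOrderOf g = Fintype.card G} = φ (Fintype.card G) + 1 := by
  rw [filter_or, card_union_of_disjoint, filter_eq', if_pos (mem_univ _), card_singleton,
    IsAddCyclic.card_addOrderOf_eq_totient dvd_rfl, add_comm]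
  exact disjoint_filter.mpr fun g _ hg => by rw [hg, addOrderOf_zero]; exact Ne.symm h

end PowerGraph

lemma Nat.totient_add_one_lt {n : ℕ} (hn : 1 < n) (hnp : ¬ n.Prime) : φ n + 1 < n := by
  have hlt := Nat.totient_lt n hn
  have hne : φ n ≠ n - 1 := fun h => hnp ((Nat.totient_eq_iff_prime (by omega)).mp h)
  omega

/-- Distance-spectral-radius lower bound for the power graph of `ZMod n`. -/
theorem distSpectralRadius_powerGraph_cyclic_lower_bound
    (n : ℕ) [NeZero n] (hn : 3 ≤ n) (hnp : ¬ n.Prime) (rho l travg : ℝ)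
    (hrho : IsGreatest (spectrum ℝ (distMatrix (addPowerGraph (ZMod n)))) rho)
    (hl : l = (Nat.totient n : ℝ) + 1)
    (htravg : travg =
      (∑ v ∈ Finset.univ.filter (fun v : ZMod n => v ≠ 0 ∧ addOrderOf v ≠ n),
        (transmission (addPowerGraph (ZMod n)) v : ℝ)) / ((n : ℝ) - l)) :
    ((travg - 1) + Real.sqrt ((travg - 2 * l + 1) ^ 2 + 4 * l * ((n : ℝ) - l))) / 2 ≤ rho := by
  set S : Finset (ZMod n) := {v | v = 0 ∨ addOrderOf v = n}
  have hS : ∀ v ∈ S, (addPowerGraph (ZMod n)).IsUniversal v := by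
    intro v hv
    rcases (mem_filter.mp hv).2 with rfl | hv
    · exact addPowerGraph_isUniversal_zero
    · exact addPowerGraph_isUniversal_of_addOrderOf_eq_card (by rw [hv, Nat.card_zmod])
  have hS_card : #S = φ n + 1 := by
    simpa only [ZMod.card] using
      card_filter_eq_zero_or_addOrderOf_eq_card (G := ZMod n) (by rw [ZMod.card]; omega)
  have hS_lt : φ n + 1 < n := Nat.totient_add_one_lt (by omega) hnp
  have hc_pos : 0 < (n : ℝ) - l := by
    rw [hl, sub_pos]
    exact_mod_cast hS_lt
  have hSc : Sᶜ = univ.filter fun v : ZMod n => v ≠ 0 ∧ addOrderOf v ≠ n := by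
    ext v
    simp [S]
  refine le_of_isGreatest_spectrum_distMatrix_of_isUniversal hS hrho
    (by rw [hS_card, hl]; push_cast; rfl) ?_ hc_pos ?_
  · rw [card_compl, ZMod.card, hS_card, Nat.cast_sub hS_lt.le, hl]
    push_cast
    rfl
  · rw [hSc, htravg, div_mul_cancel₀ _ hc_pos.ne']
end
end

section
/- Let n ≥ 3 and let T_avg = (∑_{v ∈ ZMod n} Tr(v)) / n be the average transmission of the power graph P(C_n) of the cyclic group ZMod n. Then the distance spectral radius of the power graph of the dihedral group of order 2n satisfies ρ₁(P(D_{2n})) ≥ ((T_avg + 2n − 2) + √((T_avg − 2n + 2)² + 4(2n − 1)²)) / 2. -/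
open scoped Classical

noncomputable section

/-- The power graph of a (multiplicative) group: distinct `x, y` are adjacent iff one is
a natural-number power of the other. -/
def powerGraph (G : Type*) [Group G] : SimpleGraph G where
  Adj x y := x ≠ y ∧ ∃ m : ℕ, x = y ^ m ∨ y = x ^ m
  symm := by
    constructor
    rintro x y ⟨hxy, m, hm⟩
    exact ⟨hxy.symm, m, hm.symm⟩
  loopless := by
    constructor
    rintro x ⟨hx, -⟩
    exact hx rfl

/-! Test the Rayleigh quotient of the distance matrix `D` of `P(D_{2n})` on vectors taking a
value `a` on the rotations and `b` on the reflections. The identity is a universal vertex, so all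
distances are `0`, `1` or `2`: rotations are at the same distances as in `P(C_n)`, and a
reflection is adjacent to the identity only. The block sums of `D` are therefore `n T_avg`,
`n (2n - 1)` and `n (2n - 2)`, so the Rayleigh quotient of `D` at such a vector is that of
`[[T_avg, 2n - 1], [2n - 1, 2n - 2]]` at `(a, b)`, whose supremum is the largest eigenvalue of
that `2 × 2` matrix, the stated bound. -/

open Matrix

theorem Matrix.IsHermitian.dotProduct_mulVec_le_mul_dotProduct {V : Type*} [Fintype V]
    [DecidableEq V] {M : Matrix V V ℝ} (hM : M.IsHermitian) {ρ : ℝ}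
    (hρ : ρ ∈ upperBounds (spectrum ℝ M)) (x : V → ℝ) :
    x ⬝ᵥ (M *ᵥ x) ≤ ρ * (x ⬝ᵥ x) := by
  have hpsd : (algebraMap ℝ (Matrix V V ℝ) ρ - M).PosSemidef := by
    refine posSemidef_iff_isHermitian_and_spectrum_nonneg.mpr ⟨?_, ?_⟩
    · simpa [Algebra.algebraMap_eq_smul_one] using
        (isHermitian_one.smul (IsSelfAdjoint.all ρ)).sub hM
    · rw [← spectrum.singleton_sub_eq]
      rintro _ ⟨_, rfl, μ, hμ, rfl⟩
      exact sub_nonneg.mpr (hρ hμ)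
  simpa only [star_trivial, Algebra.algebraMap_eq_smul_one, sub_mulVec, smul_mulVec,
    one_mulVec, dotProduct_sub, dotProduct_smul, smul_eq_mul, sub_nonneg] using
    hpsd.dotProduct_mulVec_nonneg x

theorem le_of_forall_quadratic_form_le {p q r ρ : ℝ}
    (h : ∀ a b : ℝ, p * a ^ 2 + 2 * q * a * b + r * b ^ 2 ≤ ρ * (a ^ 2 + b ^ 2)) :
    ((p + r) + √((p - r) ^ 2 + 4 * q ^ 2)) / 2 ≤ ρ := by
  set μ := ((p + r) + √((p - r) ^ 2 + 4 * q ^ 2)) / 2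
  have hsqrt : √((p - r) ^ 2 + 4 * q ^ 2) ^ 2 = (p - r) ^ 2 + 4 * q ^ 2 :=
    Real.sq_sqrt (by positivity)
  have hchar : (μ - p) * (μ - r) = q ^ 2 := by linear_combination hsqrt / 4
  -- `(q, μ - p)` is an eigenvector of `[[p, q], [q, r]]` for the eigenvalue `μ`
  have heigen :
      p * q ^ 2 + 2 * q * q * (μ - p) + r * (μ - p) ^ 2 = μ * (q ^ 2 + (μ - p) ^ 2) := by
    linear_combination (p - μ) * hchar
  rcases (add_nonneg (sq_nonneg q) (sq_nonneg (μ - p))).eq_or_lt with hzero | hpos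
  · have hμ : μ = p := by nlinarith
    simpa [hμ] using h 1 0
  · have hq := h q (μ - p)
    rw [heigen] at hq
    exact le_of_mul_le_mul_right hq hpos

theorem Fintype.sum_ite_eq_sub_add {α R : Type*} [Fintype α] [DecidableEq α] [Ring R]
    (t : α) (c₁ c₂ : R) :
    ∑ i, (if i = t then c₁ else c₂) = c₁ - c₂ + Fintype.card α * c₂ := by
  have h : ∀ i, (if i = t then c₁ else c₂) = (if i = t then c₁ - c₂ else 0) + c₂ := by
    intro i
    split_ifs <;> simp
  simp [h, Finset.sum_add_distrib]

theorem SimpleGraph.dist_eq_ite_of_forall_adj {V : Type*} {G : SimpleGraph V}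
    [DecidableRel G.Adj] [DecidableEq V] {c : V} (hc : ∀ v, v ≠ c → G.Adj c v) (u v : V) :
    G.dist u v = if u = v then 0 else if G.Adj u v then 1 else 2 := by
  split_ifs with huv hadj
  · rw [huv, dist_self]
  · exact dist_eq_one_iff_adj.mpr hadj
  · have huc : u ≠ c := fun h => hadj (h ▸ hc v (by rintro rfl; exact huv h))
    have hvc : v ≠ c := fun h => hadj (h ▸ (hc u huc).symm)
    have h2 : G.edist u v = 2 := edist_eq_two_iff.mpr
      ⟨huv, hadj, c, G.mem_commonNeighbors.mpr ⟨(hc u huc).symm, (hc v hvc).symm⟩⟩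
    simp [dist, h2]

theorem isHermitian_distMatrix {V : Type*} [Fintype V] (G : SimpleGraph V) :
    (distMatrix G).IsHermitian := by
  ext u v
  simp [distMatrix, SimpleGraph.dist_comm]

theorem powerGraph_adj_one {G : Type*} [Group G] {v : G} (hv : v ≠ 1) :
    (powerGraph G).Adj 1 v :=
  ⟨hv.symm, 0, .inl (pow_zero v).symm⟩

theorem addPowerGraph_adj_zero {G : Type*} [AddGroup G] {v : G} (hv : v ≠ 0) :
    (addPowerGraph G).Adj 0 v :=
  ⟨hv.symm, 0, .inl (zero_smul ℕ v).symm⟩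

namespace DihedralGroup

variable {n : ℕ}

theorem sr_ne_one (i : ZMod n) : sr i ≠ 1 := by
  simp [one_def, -r_zero]

theorem sr_pow_eq_one_or_eq (i : ZMod n) (m : ℕ) : sr i ^ m = 1 ∨ sr i ^ m = sr i := by
  rcases Nat.even_or_odd' m with ⟨k, rfl | rfl⟩
  · simp [pow_mul, sq]
  · simp [pow_succ, pow_mul]

theorem powerGraph_adj_r_r_iff {i j : ZMod n} :
    (powerGraph (DihedralGroup n)).Adj (r i) (r j) ↔ (addPowerGraph (ZMod n)).Adj i j := by
  simp [powerGraph, addPowerGraph, r_pow, nsmul_eq_mul, mul_comm]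

theorem powerGraph_adj_sr_iff {i : ZMod n} {v : DihedralGroup n} :
    (powerGraph (DihedralGroup n)).Adj (sr i) v ↔ v = 1 := by
  refine ⟨fun ⟨hne, m, hm⟩ => ?_, ?_⟩
  · rcases hm with hm | hm
    · rcases v with j | j
      · simp [r_pow] at hm
      · rcases sr_pow_eq_one_or_eq j m with h | h <;> rw [h] at hm
        · exact absurd hm (sr_ne_one i)
        · exact absurd hm hne
    · rcases sr_pow_eq_one_or_eq i m with h | h <;> rw [h] at hm
      · exact hm
      · exact absurd hm.symm hne
  · rintro rfl
    exact (powerGraph_adj_one (sr_ne_one i)).symm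

theorem dist_r_r (i j : ZMod n) :
    (powerGraph (DihedralGroup n)).dist (r i) (r j) = (addPowerGraph (ZMod n)).dist i j := by
  rw [SimpleGraph.dist_eq_ite_of_forall_adj (fun _ => powerGraph_adj_one),
    SimpleGraph.dist_eq_ite_of_forall_adj (fun _ => addPowerGraph_adj_zero)]
  simp [powerGraph_adj_r_r_iff]

theorem dist_sr_r (i j : ZMod n) :
    (powerGraph (DihedralGroup n)).dist (sr i) (r j) = if j = 0 then 1 else 2 := by
  rw [SimpleGraph.dist_eq_ite_of_forall_adj (fun _ => powerGraph_adj_one)]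
  simp [powerGraph_adj_sr_iff, one_def, -r_zero]

theorem dist_sr_sr (i j : ZMod n) :
    (powerGraph (DihedralGroup n)).dist (sr i) (sr j) = if j = i then 0 else 2 := by
  rw [SimpleGraph.dist_eq_ite_of_forall_adj (fun _ => powerGraph_adj_one)]
  simp [powerGraph_adj_sr_iff, sr_ne_one, eq_comm]

def rotReflVec {R : Type*} (a b : R) : DihedralGroup n → R
  | r _ => a
  | sr _ => b

variable [NeZero n]

theorem sum_univ {M : Type*} [AddCommMonoid M] (f : DihedralGroup n → M) :
    ∑ g, f g = ∑ i, f (r i) + ∑ i, f (sr i) := by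
  rw [← equivSum.symm.sum_comp, Fintype.sum_sum_type]
  rfl

section CommSemiring

variable {R : Type*} [CommSemiring R]

theorem rotReflVec_dotProduct_mulVec (M : Matrix (DihedralGroup n) (DihedralGroup n) R)
    (a b : R) :
    rotReflVec a b ⬝ᵥ (M *ᵥ rotReflVec a b) =
      a * a * ∑ i, ∑ j, M (r i) (r j) + a * b * ∑ i, ∑ j, M (r i) (sr j) +
        b * a * ∑ i, ∑ j, M (sr i) (r j) + b * b * ∑ i, ∑ j, M (sr i) (sr j) := by
  simp only [dotProduct, mulVec, sum_univ, rotReflVec, Finset.mul_sum, mul_add,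
    Finset.sum_add_distrib]
  ring_nf

theorem rotReflVec_dotProduct_self (a b : R) :
    rotReflVec (n := n) a b ⬝ᵥ rotReflVec a b = n * (a * a + b * b) := by
  simp [dotProduct, sum_univ, rotReflVec, mul_add]

end CommSemiring

theorem sum_sum_dist_r_r :
    ∑ i, ∑ j, ((powerGraph (DihedralGroup n)).dist (r i) (r j) : ℝ) =
      ∑ v, (transmission (addPowerGraph (ZMod n)) v : ℝ) := by
  simp [transmission, dist_r_r]

theorem sum_sum_dist_sr_r :
    ∑ i, ∑ j, ((powerGraph (DihedralGroup n)).dist (sr i) (r j) : ℝ) = n * (2 * n - 1) := by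
  simp [dist_sr_r, apply_ite, Fintype.sum_ite_eq_sub_add]
  ring

theorem sum_sum_dist_r_sr :
    ∑ i, ∑ j, ((powerGraph (DihedralGroup n)).dist (r i) (sr j) : ℝ) = n * (2 * n - 1) := by
  rw [Finset.sum_comm, ← sum_sum_dist_sr_r]
  simp only [SimpleGraph.dist_comm (u := r _)]

theorem sum_sum_dist_sr_sr :
    ∑ i, ∑ j, ((powerGraph (DihedralGroup n)).dist (sr i) (sr j) : ℝ) = n * (2 * n - 2) := by
  simp [dist_sr_sr, apply_ite, Fintype.sum_ite_eq_sub_add]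
  ring

end DihedralGroup

open DihedralGroup in
theorem distSpectralRadius_powerGraph_dihedral_lower_bound_general
    (n : ℕ) [NeZero n] (rho Tavg : ℝ)
    (hrho : IsGreatest (spectrum ℝ (distMatrix (powerGraph (DihedralGroup n)))) rho)
    (hTavg : Tavg =
      (∑ v : ZMod n, (transmission (addPowerGraph (ZMod n)) v : ℝ)) / (n : ℝ)) :
    ((Tavg + 2 * n - 2) +
      Real.sqrt ((Tavg - 2 * n + 2) ^ 2 + 4 * (2 * (n : ℝ) - 1) ^ 2)) / 2 ≤ rho := by
  have hn : (0 : ℝ) < n := Nat.cast_pos.mpr (NeZero.pos n)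
  have hsum : ∑ v : ZMod n, (transmission (addPowerGraph (ZMod n)) v : ℝ) = n * Tavg := by
    rw [hTavg]
    field_simp
  have hquad (a b : ℝ) :
      Tavg * a ^ 2 + 2 * (2 * n - 1) * a * b + (2 * n - 2) * b ^ 2 ≤ rho * (a ^ 2 + b ^ 2) := by
    have h := (isHermitian_distMatrix _).dotProduct_mulVec_le_mul_dotProduct hrho.2
      (rotReflVec a b)
    simp only [rotReflVec_dotProduct_mulVec, rotReflVec_dotProduct_self, distMatrix,
      sum_sum_dist_r_r, sum_sum_dist_r_sr, sum_sum_dist_sr_r, sum_sum_dist_sr_sr, hsum] at h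
    refine le_of_mul_le_mul_left ?_ hn
    linear_combination h
  convert le_of_forall_quadratic_form_le hquad using 4 <;> ring

/-- Distance-spectral-radius lower bound for the power graph of the dihedral group of
order `2n`, in terms of the average transmission of the power graph of `ZMod n`. -/
theorem distSpectralRadius_powerGraph_dihedral_lower_bound
    (n : ℕ) [NeZero n] (hn : 3 ≤ n) (rho Tavg : ℝ)
    (hrho : IsGreatest (spectrum ℝ (distMatrix (powerGraph (DihedralGroup n)))) rho)
    (hTavg : Tavg =
      (∑ v : ZMod n, (transmission (addPowerGraph (ZMod n)) v : ℝ)) / (n : ℝ)) :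
    ((Tavg + 2 * n - 2) +
      Real.sqrt ((Tavg - 2 * n + 2) ^ 2 + 4 * (2 * (n : ℝ) - 1) ^ 2)) / 2 ≤ rho :=
  distSpectralRadius_powerGraph_dihedral_lower_bound_general n rho Tavg hrho hTavg
end
end
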